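/- Let α be a complex number with Re(α) > 0 and Im(α) ≠ 0. Then for every real s ≥ 0, |√s / √(α² − s)| ≤ √(1 + |α|² / (2 |Re(α) Im(α)|)). -/

import Mathlib

/-- For α ∈ ℂ with Re(α) > 0, Im(α) ≠ 0, and s ≥ 0 real,
    |√s / √(α² − s)| ≤ √(1 + |α|² / (2 |Re(α) Im(α)|)). -/
theorem stmt_3 (α : ℂ) (hα : 0 < α.re) (hα' : α.im ≠ 0) (s : ℝ) (hs : 0 ≤ s) :
    Real.sqrt s / ‖(α ^ 2 - (s : ℂ)) ^ ((1 : ℂ) / 2)‖ ≤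
      Real.sqrt (1 + ‖α‖ ^ 2 / (2 * |α.re * α.im|)) := by
  set z : ℂ := α ^ 2 - (s : ℂ) with hz
  have him : z.im = 2 * (α.re * α.im) := by
    simp [hz, pow_two, Complex.mul_im]; ring
  have hre : z.re = α.re ^ 2 - α.im ^ 2 - s := by
    simp [hz, pow_two, Complex.mul_re]; try ring
  have hc : 0 < 2 * |α.re * α.im| := by positivity
  have habs : ‖z ^ ((1 : ℂ) / 2)‖ = Real.sqrt (‖z‖) := by
    have h1 : ((1 : ℂ) / 2) = (((1 : ℝ) / 2 : ℝ) : ℂ) := by norm_num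
    rw [h1, Complex.norm_cpow_real, ← Real.sqrt_eq_rpow]
  -- |z| ≥ 2|ab|
  have hA1 : 2 * |α.re * α.im| ≤ ‖z‖ := by
    calc 2 * |α.re * α.im| = |z.im| := by simp [him, abs_mul]
    _ ≤ ‖z‖ := Complex.abs_im_le_norm z
  have hApos : 0 < ‖z‖ := lt_of_lt_of_le hc hA1
  -- |z| ≥ s - |α|²
  have hsq : (‖α‖) ^ 2 = α.re ^ 2 + α.im ^ 2 := by
    rw [Complex.sq_norm, Complex.normSq_apply]; ring
  have hA2 : s - (‖α‖) ^ 2 ≤ ‖z‖ := by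
    calc s - (‖α‖) ^ 2 ≤ -z.re := by rw [hre, hsq]; nlinarith [sq_nonneg α.im]
    _ ≤ |z.re| := neg_le_abs _
    _ ≤ ‖z‖ := Complex.abs_re_le_norm z
  have key : s / ‖z‖ ≤ 1 + (‖α‖) ^ 2 / (2 * |α.re * α.im|) := by
    rw [div_le_iff₀ hApos]
    have h2 : (‖α‖) ^ 2 ≤ ‖z‖ * ((‖α‖) ^ 2 / (2 * |α.re * α.im|)) := by
      rw [mul_div_assoc']
      rw [le_div_iff₀ hc]
      have := sq_nonneg (‖α‖)
      nlinarith
    nlinarith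
  calc Real.sqrt s / ‖z ^ ((1 : ℂ) / 2)‖
      = Real.sqrt (s / ‖z‖) := by rw [habs, Real.sqrt_div hs]
    _ ≤ _ := Real.sqrt_le_sqrt key
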